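/- Let s > 0, k > 0, σ > 0, t > 0 and m ∈ ℝ. Then ∫_ℝ max{ s e^{(m−σ²/2)t + σ√t·ζ} − k, 0 } dγ(ζ) = s e^{mt} Φ(d₁(t)) − k Φ(d₂(t)) = BS_C(s,k,t). (This is the Black–Scholes formula for the undiscounted price of a European call option on an asset whose price at time t is lognormal with drift m and volatility σ.) -/

import Mathlib

open MeasureTheory intervalIntegral Real ProbabilityTheory Filter Asymptotics

/-- The standard Gaussian measure on ℝ. -/
noncomputable def gaussMeasure : Measure ℝ := gaussianReal 0 1

/-- The standard normal CDF. -/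
noncomputable def Phi (x : ℝ) : ℝ :=
  ∫ u in Set.Iic x, Real.exp (-u ^ 2 / 2) / Real.sqrt (2 * Real.pi)

/-- The standard normal density. -/
noncomputable def gaussPdf (x : ℝ) : ℝ := Real.exp (-x ^ 2 / 2) / Real.sqrt (2 * Real.pi)

/-- Black–Scholes `d₁` with volatility `σ` and drift `m`. -/
noncomputable def d1 (σ m s k t : ℝ) : ℝ :=
  (Real.log (s / k) + (m + σ ^ 2 / 2) * t) / (σ * Real.sqrt t)

/-- Black–Scholes `d₂` with volatility `σ` and drift `m`. -/
noncomputable def d2 (σ m s k t : ℝ) : ℝ := d1 σ m s k t - σ * Real.sqrt t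

/-- Black–Scholes call price (undiscounted) with volatility `σ` and drift `m`. -/
noncomputable def BSC (σ m s k t : ℝ) : ℝ :=
  s * Real.exp (m * t) * Phi (d1 σ m s k t) - k * Phi (d2 σ m s k t)

/-- Black–Scholes put price (undiscounted) with volatility `σ` and drift `m`. -/
noncomputable def BSP (σ m s k t : ℝ) : ℝ :=
  k * Phi (-d2 σ m s k t) - s * Real.exp (m * t) * Phi (-d1 σ m s k t)

/-- The function `Υ₀` from the ATM forward valuation formula. -/
noncomputable def Ups0 (t x y : ℝ) : ℝ :=
  y / (x * Real.sqrt (2 * x + y ^ 2)) * (Phi (Real.sqrt ((2 * x + y ^ 2) * t)) - 1 / 2)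
    - 1 / x * (Real.exp (-x * t) * Phi (y * Real.sqrt t) - 1 / 2)

/-- The second-order approximation `Υ̃` of the generalized `Υ` function. -/
noncomputable def UpsTilde (t x y z : ℝ) : ℝ :=
  Ups0 t x y
    + 2 / Real.sqrt (2 * x + y ^ 2) * (Phi (Real.sqrt ((2 * x + y ^ 2) * t)) - 1 / 2)
      * (z - y / 2 * z ^ 2)

/-- Covariance of two real random variables. -/
noncomputable def cov {Ω : Type*} [MeasurableSpace Ω] (P : Measure Ω) (X Y : Ω → ℝ) : ℝ :=
  (∫ ω, X ω * Y ω ∂P) - (∫ ω, X ω ∂P) * (∫ ω, Y ω ∂P)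

/-- Variance of a real random variable. -/
noncomputable def var {Ω : Type*} [MeasurableSpace Ω] (P : Measure Ω) (X : Ω → ℝ) : ℝ :=
  cov P X X

/-- Correlation of two real random variables. -/
noncomputable def corr {Ω : Type*} [MeasurableSpace Ω] (P : Measure Ω) (X Y : Ω → ℝ) : ℝ :=
  cov P X Y / Real.sqrt (var P X * var P Y)

/-! The call pays off exactly on the half-line `ζ > -d₂`. With `b = σ√t` and `φ` the
standard normal density, completing the square gives `e^{bζ} φ(ζ) = e^{b²/2} φ(ζ - b)`, so on
that half-line the exponential term integrates to `e^{b²/2} Φ(d₂ + b) = e^{b²/2} Φ(d₁)` and the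
strike term to `Φ(d₂)`. -/

open Set

lemma gaussianPDFReal_zero_one : gaussianPDFReal 0 1 = gaussPdf := by
  ext x
  simp only [gaussianPDFReal, gaussPdf, NNReal.coe_one, mul_one, sub_zero, neg_div]
  rw [inv_mul_eq_div]

lemma integral_gaussMeasure (g : ℝ → ℝ) :
    ∫ ζ, g ζ ∂gaussMeasure = ∫ ζ, gaussPdf ζ * g ζ := by
  rw [gaussMeasure, integral_gaussianReal_eq_integral_smul one_ne_zero, gaussianPDFReal_zero_one]
  rfl

lemma gaussPdf_neg (x : ℝ) : gaussPdf (-x) = gaussPdf x := by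
  rw [gaussPdf, gaussPdf, neg_sq]

lemma exp_mul_mul_gaussPdf (b x : ℝ) :
    exp (b * x) * gaussPdf x = exp (b ^ 2 / 2) * gaussPdf (x - b) := by
  simp only [gaussPdf, mul_div_assoc', ← exp_add]
  congr 2
  ring

lemma integrable_gaussPdf : Integrable gaussPdf :=
  gaussianPDFReal_zero_one ▸ integrable_gaussianPDFReal 0 1

lemma integrable_exp_mul_mul_gaussPdf (b : ℝ) :
    Integrable fun x ↦ exp (b * x) * gaussPdf x := by
  simp_rw [exp_mul_mul_gaussPdf]
  exact (integrable_gaussPdf.comp_sub_right b).const_mul _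

lemma setIntegral_Ioi_comp_sub_right {E : Type*} [NormedAddCommGroup E] [NormedSpace ℝ E]
    (f : ℝ → E) (b c : ℝ) : ∫ x in Ioi c, f (x - b) = ∫ x in Ioi (c - b), f x := by
  have h := (measurableEmbedding_subRight b).setIntegral_map (μ := volume) f (Ioi (c - b))
  rw [map_sub_right_eq_self volume b] at h
  rw [h, preimage_sub_const_Ioi, sub_add_cancel]

lemma setIntegral_Ioi_gaussPdf (c : ℝ) : ∫ x in Ioi c, gaussPdf x = Phi (-c) := by
  calc ∫ x in Ioi c, gaussPdf x = ∫ x in Ioi c, gaussPdf (-x) := by simp_rw [gaussPdf_neg]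
    _ = Phi (-c) := integral_comp_neg_Ioi c gaussPdf

lemma setIntegral_Ioi_exp_mul_mul_gaussPdf (b c : ℝ) :
    ∫ x in Ioi c, exp (b * x) * gaussPdf x = exp (b ^ 2 / 2) * Phi (b - c) := by
  simp_rw [exp_mul_mul_gaussPdf, MeasureTheory.integral_const_mul,
    setIntegral_Ioi_comp_sub_right gaussPdf, setIntegral_Ioi_gaussPdf, neg_sub]

lemma d2_eq_div {σ t : ℝ} (hσ : σ ≠ 0) (ht : 0 < t) (m s k : ℝ) :
    d2 σ m s k t = (log (s / k) + (m - σ ^ 2 / 2) * t) / (σ * √t) := by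
  have hb : σ * √t ≠ 0 := mul_ne_zero hσ (sqrt_pos.2 ht).ne'
  rw [d2, d1, eq_div_iff hb, sub_mul, div_mul_cancel₀ _ hb, ← sq, mul_pow, sq_sqrt ht.le]
  ring

lemma lt_mul_exp_mul_iff {A b k : ℝ} (hA : 0 < A) (hk : 0 < k) (hb : 0 < b) (ζ : ℝ) :
    k < A * exp (b * ζ) ↔ log (k / A) / b < ζ := by
  rw [div_lt_iff₀ hb, mul_comm ζ, log_lt_iff_lt_exp (div_pos hk hA), div_lt_iff₀' hA]

lemma max_mul_exp_sub_eq_indicator {A b k : ℝ} (hA : 0 < A) (hk : 0 < k) (hb : 0 < b) (ζ : ℝ) :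
    max (A * exp (b * ζ) - k) 0
      = (Ioi (log (k / A) / b)).indicator (fun ζ ↦ A * exp (b * ζ) - k) ζ := by
  by_cases h : log (k / A) / b < ζ
  · rw [indicator_of_mem (mem_Ioi.2 h), max_eq_left]
    linarith [(lt_mul_exp_mul_iff hA hk hb ζ).2 h]
  · rw [indicator_of_notMem (mt mem_Ioi.1 h), max_eq_right]
    linarith [not_lt.1 (mt (lt_mul_exp_mul_iff hA hk hb ζ).1 h)]

theorem integral_max_mul_exp_sub_gaussMeasure {A b k : ℝ} (hA : 0 < A) (hk : 0 < k) (hb : 0 < b) :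
    ∫ ζ, max (A * exp (b * ζ) - k) 0 ∂gaussMeasure
      = A * exp (b ^ 2 / 2) * Phi (b - log (k / A) / b) - k * Phi (-(log (k / A) / b)) := by
  have hsplit : ∀ ζ, gaussPdf ζ * (A * exp (b * ζ) - k)
      = A * (exp (b * ζ) * gaussPdf ζ) - k * gaussPdf ζ := fun ζ ↦ by ring
  simp_rw [integral_gaussMeasure, max_mul_exp_sub_eq_indicator hA hk hb, ← indicator_mul_right]
  rw [MeasureTheory.integral_indicator measurableSet_Ioi]
  simp_rw [hsplit]
  rw [integral_sub ((integrable_exp_mul_mul_gaussPdf b).integrableOn.const_mul A)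
      (integrable_gaussPdf.integrableOn.const_mul k), MeasureTheory.integral_const_mul,
    MeasureTheory.integral_const_mul, setIntegral_Ioi_exp_mul_mul_gaussPdf,
    setIntegral_Ioi_gaussPdf, mul_assoc]

/-- Black–Scholes formula for the undiscounted price of a European call option on
a lognormal asset with drift `m` and volatility `σ`. -/
theorem black_scholes_call (σ m s k t : ℝ) (hs : 0 < s) (hk : 0 < k)
    (hσ : 0 < σ) (ht : 0 < t) :
    (∫ ζ, max (s * Real.exp ((m - σ ^ 2 / 2) * t + σ * Real.sqrt t * ζ) - k) 0 ∂gaussMeasure)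
        = s * Real.exp (m * t) * Phi (d1 σ m s k t) - k * Phi (d2 σ m s k t)
      ∧ s * Real.exp (m * t) * Phi (d1 σ m s k t) - k * Phi (d2 σ m s k t)
        = BSC σ m s k t := by
  refine ⟨?_, rfl⟩
  have hthreshold : log (k / (s * exp ((m - σ ^ 2 / 2) * t))) / (σ * √t) = -d2 σ m s k t := by
    rw [d2_eq_div hσ.ne' ht, ← neg_div, log_div hk.ne' (by positivity),
      log_mul hs.ne' (exp_pos _).ne', log_exp, log_div hs.ne' hk.ne']
    ring
  have hforward :
      s * exp ((m - σ ^ 2 / 2) * t) * exp ((σ * √t) ^ 2 / 2) = s * exp (m * t) := by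
    rw [mul_assoc, ← exp_add, mul_pow, sq_sqrt ht.le]
    ring_nf
  simp_rw [exp_add, ← mul_assoc]
  rw [integral_max_mul_exp_sub_gaussMeasure (by positivity) hk (by positivity), hthreshold,
    hforward, sub_neg_eq_add, neg_neg, d2, add_sub_cancel]
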